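/- arXiv:2510.23759 — 4 statements merged into one kernel-verified Lean document; each statement's English description precedes it below -/
import Mathlib

section
/- Let G be a cyclic p-group and U a finitely generated module over the group algebra F G, where F is a field of characteristic p. If the G-fixed points U^G equal Ĝ·U (the image of multiplication by the sum of all group elements), then U is a free FG-module. -/
/-!
Let `g₀` generate `G` and put `a = g₀ - 1 ∈ F[G]`. Since `|G| = p ^ n` and `F` has characteristic
`p`, we have `a ^ |G| = (g₀ - 1) ^ |G| = g₀ ^ |G| - 1 = 0` and `Ĝ = ∑ (a + 1) ^ k = a ^ (|G| - 1)`,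
while `U^G = ker a`. The hypothesis thus reads `ker a = a ^ (|G| - 1) U`, so `ker a` lies in every
`a ^ i U` with `i < |G|` and each step of `U ⊇ a U ⊇ a ^ 2 U ⊇ ⋯ ⊇ 0` has dimension `dim ker a`.
Hence `dim U = |G| · dim (U / a U)`. Lifting a basis of `U / a U` gives, by Nakayama for the
nilpotent `a`, a surjection `F[G] ^ k → U`, and it is an isomorphism by counting dimensions.
-/

open Module LinearMap Finset

section CharP

open Polynomial

theorem Polynomial.geom_sum_X_add_one_char_pow {R : Type*} [CommRing R] (p : ℕ)
    [hp : Fact p.Prime] [CharP R p] (n : ℕ) :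
    ∑ k ∈ range (p ^ n), (X + 1 : R[X]) ^ k = X ^ (p ^ n - 1) := by
  refine isRegular_X.right ?_
  have hpos : p ^ n - 1 + 1 = p ^ n := Nat.sub_add_cancel (Nat.one_le_pow _ _ hp.out.pos)
  calc (∑ k ∈ range (p ^ n), (X + 1 : R[X]) ^ k) * X
      = (X + 1) ^ p ^ n - 1 := by rw [← geom_sum_mul, add_sub_cancel_right]
    _ = X ^ (p ^ n - 1) * X := by
      rw [add_pow_char_pow, one_pow, add_sub_cancel_right, ← pow_succ, hpos]

theorem geom_sum_add_one_char_pow (R : Type*) {A : Type*} [CommRing R] (p : ℕ) [Fact p.Prime]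
    [CharP R p] [Ring A] [Algebra R A] (n : ℕ) (a : A) :
    ∑ k ∈ range (p ^ n), (a + 1) ^ k = a ^ (p ^ n - 1) := by
  simpa using congrArg (aeval a) (geom_sum_X_add_one_char_pow (R := R) p n)

theorem add_one_pow_char_pow (R : Type*) {A : Type*} [CommRing R] (p : ℕ) [Fact p.Prime]
    [CharP R p] [Ring A] [Algebra R A] (n : ℕ) (a : A) : (a + 1) ^ p ^ n = a ^ p ^ n + 1 := by
  simpa using congrArg (aeval a) (add_pow_char_pow (X : R[X]) 1 (p := p) (n := n))

end CharP

theorem Finset.sum_univ_eq_sum_range_pow {G M : Type*} [Group G] [Fintype G] [AddCommMonoid M]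
    {g₀ : G} (hg₀ : ∀ g, g ∈ Subgroup.zpowers g₀) (f : G → M) :
    ∑ g, f g = ∑ k ∈ range (Fintype.card G), f (g₀ ^ k) := by
  rw [← Nat.card_eq_fintype_card, ← orderOf_eq_card_of_forall_mem_zpowers hg₀]
  symm
  refine sum_nbij (g₀ ^ ·) (by simp) (by simpa using pow_injOn_Iio_orderOf) (fun g _ => ?_)
    (by simp)
  obtain ⟨k, rfl⟩ := mem_powers_iff_mem_zpowers.2 (hg₀ g)
  exact ⟨k % orderOf g₀, by simpa using Nat.mod_lt _ (orderOf_pos g₀), pow_mod_orderOf g₀ k⟩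

namespace MonoidAlgebra

variable {F G : Type*} [Field F] [Group G] [Fintype G] {p n : ℕ} [Fact p.Prime] [CharP F p]

theorem of_sub_one_pow_card_eq_zero (hcard : Fintype.card G = p ^ n) (g : G) :
    (of F G g - 1) ^ Fintype.card G = 0 := by
  have h := add_one_pow_char_pow F p n (of F G g - 1)
  rwa [sub_add_cancel, ← hcard, ← map_pow, pow_card_eq_one, map_one, right_eq_add] at h

theorem sum_of_eq_of_sub_one_pow (hcard : Fintype.card G = p ^ n) {g₀ : G}
    (hg₀ : ∀ g, g ∈ Subgroup.zpowers g₀) :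
    ∑ g, of F G g = (of F G g₀ - 1) ^ (Fintype.card G - 1) := by
  rw [sum_univ_eq_sum_range_pow hg₀, hcard, ← geom_sum_add_one_char_pow F p n, sub_add_cancel]
  simp_rw [map_pow]

end MonoidAlgebra

namespace Module.End

variable {K V : Type*} [DivisionRing K] [AddCommGroup V] [Module K V] [FiniteDimensional K V]

theorem finrank_range_pow_eq_finrank_range_pow_succ_add {X : Module.End K V} {i : ℕ}
    (hle : ker X ≤ range (X ^ i)) :
    finrank K (range (X ^ i)) = finrank K (range (X ^ (i + 1))) + finrank K (ker X) := by
  have hrange : range (X.domRestrict (range (X ^ i))) = range (X ^ (i + 1)) := by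
    rw [range_domRestrict, pow_succ', Module.End.mul_eq_comp, range_comp]
  have hker : finrank K (ker (X.domRestrict (range (X ^ i)))) = finrank K (ker X) := by
    rw [ker_domRestrict]
    exact (Submodule.comapSubtypeEquivOfLe hle).finrank_eq
  rw [← hrange, ← hker, finrank_range_add_finrank_ker]

theorem finrank_eq_mul_finrank_ker {X : Module.End K V} {N : ℕ} (hXN : X ^ N = 0)
    (hker : ker X = range (X ^ (N - 1))) : finrank K V = N * finrank K (ker X) := by
  have key : ∀ j ≤ N, finrank K (range (X ^ (N - j))) = j * finrank K (ker X) := by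
    intro j
    induction j with
    | zero => simp [hXN]
    | succ j ih =>
      intro hj
      have hle : ker X ≤ range (X ^ (N - (j + 1))) := by
        rw [hker, show N - 1 = N - (j + 1) + j by omega, pow_add, Module.End.mul_eq_comp]
        exact range_comp_le_range _ _
      rw [finrank_range_pow_eq_finrank_range_pow_succ_add hle,
        show N - (j + 1) + 1 = N - j by omega, ih (by omega), add_one_mul]
  have h := key N le_rfl
  rwa [Nat.sub_self, pow_zero, Module.End.one_eq_id, range_id, finrank_top] at h

theorem finrank_quotient_range_eq_finrank_ker (X : Module.End K V) :
    finrank K (V ⧸ range X) = finrank K (ker X) := by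
  have h₁ := (range X).finrank_quotient_add_finrank
  have h₂ := X.finrank_range_add_finrank_ker
  omega

end Module.End

/-- Nakayama's lemma for a nilpotent endomorphism. -/
theorem Submodule.eq_top_of_sup_range_eq_top {R M : Type*} [Ring R] [AddCommGroup M] [Module R M]
    {X : Module.End R M} (hX : IsNilpotent X) {W : Submodule R M} (hW : W ∈ X.invtSubmodule)
    (h : W ⊔ range X = ⊤) : W = ⊤ := by
  have step : ∀ j, W ⊔ range (X ^ j) = ⊤ := by
    intro j
    induction j with
    | zero => simp [Module.End.one_eq_id]
    | succ j ih =>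
      have hle : range X ≤ W ⊔ range (X ^ (j + 1)) :=
        calc range X = (W ⊔ range (X ^ j)).map X := by rw [ih, Submodule.map_top]
          _ = W.map X ⊔ range (X ^ (j + 1)) := by
            rw [Submodule.map_sup, ← range_comp, ← Module.End.mul_eq_comp, ← pow_succ']
          _ ≤ W ⊔ range (X ^ (j + 1)) :=
            sup_le_sup_right ((Module.End.mem_invtSubmodule_iff_map_le _).1 hW) _
      rw [eq_top_iff, ← h]
      exact sup_le le_sup_left hle
  obtain ⟨N, hN⟩ := hX
  simpa [hN] using step N

theorem Module.free_of_finrank_eq_mul_finrank_ker {F A M : Type*} [Field F] [Ring A]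
    [Algebra F A] [Module.Finite F A] [AddCommGroup M] [Module F M] [Module A M]
    [IsScalarTower F A M] [Module.Finite F M] {a : A} (ha : IsNilpotent a)
    (h : finrank F M = finrank F A * finrank F (ker (Algebra.lsmul F F M a))) :
    Module.Free A M := by
  set X := Algebra.lsmul F F M a
  set k := finrank F (ker X)
  let b := Module.finBasisOfFinrankEq F (M ⧸ range X) X.finrank_quotient_range_eq_finrank_ker
  let u : Fin k → M := Function.surjInv (range X).mkQ_surjective ∘ b
  let φ : (Fin k → A) →ₗ[A] M := Fintype.linearCombination A u
  have hu : ∀ i, u i ∈ range φ := fun i =>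
    ⟨Pi.single i 1, by simp [φ, Fintype.linearCombination_apply_single]⟩
  have hsup : (range φ).restrictScalars F ⊔ range X = ⊤ := by
    rw [sup_comm, ← Submodule.map_mkQ_eq_top, eq_top_iff, ← b.span_eq, Submodule.span_le]
    rintro _ ⟨i, rfl⟩
    exact ⟨u i, hu i, Function.surjInv_eq _ _⟩
  have hsurj : Function.Surjective φ := by
    rw [← range_eq_top, ← Submodule.restrictScalars_eq_top_iff F]
    exact Submodule.eq_top_of_sup_range_eq_top (ha.map (Algebra.lsmul F F M))
      (fun _ hm => Submodule.smul_mem _ a hm) hsup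
  have hdim : finrank F (Fin k → A) = finrank F M := by
    rw [h, Module.finrank_pi_fintype]
    simp [mul_comm]
  have hinj : Function.Injective φ :=
    (injective_iff_surjective_of_finrank_eq_finrank hdim (f := φ.restrictScalars F)).2 hsurj
  exact Module.Free.of_equiv (LinearEquiv.ofBijective φ ⟨hinj, hsurj⟩)

namespace Representation

variable {k V : Type*} [CommRing k] [AddCommGroup V] [Module k V]

section Monoid

variable {G : Type*} [Monoid G] (ρ : Representation k G V)

theorem ker_lsmul_asModule (r : MonoidAlgebra k G) :
    ker (Algebra.lsmul k k ρ.asModule r) =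
      (ker (ρ.asAlgebraHom r)).comap ρ.asModuleEquiv.toLinearMap :=
  rfl

theorem range_lsmul_asModule (r : MonoidAlgebra k G) :
    range (Algebra.lsmul k k ρ.asModule r) =
      (range (ρ.asAlgebraHom r)).comap ρ.asModuleEquiv.toLinearMap :=
  rfl

end Monoid

theorem invariants_eq_ker_asAlgebraHom_of_sub_one {G : Type*} [Group G]
    (ρ : Representation k G V) {g₀ : G} (hg₀ : ∀ g, g ∈ Subgroup.zpowers g₀) :
    ρ.invariants = ker (ρ.asAlgebraHom (MonoidAlgebra.of k G g₀ - 1)) := by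
  ext v
  rw [mem_invariants_iff_of_forall_mem_zpowers ρ g₀ hg₀, mem_ker, map_sub, map_one,
    asAlgebraHom_of, LinearMap.sub_apply, Module.End.one_apply, sub_eq_zero]

end Representation

/-- Let `G` be a cyclic `p`-group and `U` a finitely generated module over the
group algebra `FG`, `F` a field of characteristic `p` (given by a representation
`ρ : Representation F G U` with `U` finitely generated over `F`).  If the `G`-fixed points
`U^G` equal `Ĝ·U`, the image of multiplication by the sum of all group elements, then `U` is a
free `FG`-module. -/
theorem stmt_1 (p : ℕ) (hp : p.Prime) (F G U : Type) [Field F] [CharP F p]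
    [Group G] [Fintype G] (hG : IsPGroup p G) (hcyc : IsCyclic G)
    [AddCommGroup U] [Module F U] [Module.Finite F U]
    (ρ : Representation F G U)
    (hfix : ρ.invariants = LinearMap.range (∑ g : G, ρ g)) :
    Module.Free (MonoidAlgebra F G) ρ.asModule := by
  have := Fact.mk hp
  obtain ⟨g₀, hg₀⟩ := hcyc.exists_generator
  obtain ⟨n, hcard⟩ := IsPGroup.iff_card.mp hG
  rw [Nat.card_eq_fintype_card] at hcard
  set a := MonoidAlgebra.of F G g₀ - 1
  have ha : a ^ Fintype.card G = 0 := MonoidAlgebra.of_sub_one_pow_card_eq_zero hcard g₀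
  have hsum : ∑ g : G, ρ g = ρ.asAlgebraHom (a ^ (Fintype.card G - 1)) := by
    rw [← MonoidAlgebra.sum_of_eq_of_sub_one_pow hcard hg₀, map_sum]
    simp_rw [Representation.asAlgebraHom_of]
  refine Module.free_of_finrank_eq_mul_finrank_ker (F := F) ⟨_, ha⟩ ?_
  rw [Module.finrank_eq_card_basis (MonoidAlgebra.basis G F)]
  refine Module.End.finrank_eq_mul_finrank_ker (by rw [← map_pow, ha, map_zero]) ?_
  rw [← map_pow, ρ.ker_lsmul_asModule, ρ.range_lsmul_asModule, ← hsum, ← hfix,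
    ρ.invariants_eq_ker_asAlgebraHom_of_sub_one hg₀]
end

section
/- Let G be a cyclic p-group, N a normal subgroup, and U an RG-lattice such that the restriction of U to N is an RN-permutation module. If U|_N = F ⊕ T with F a permutation module having no trivial direct summands and T a trivial RN-lattice (a maximal trivial summand), then the image of the natural composite map U^N → U_N → U_N/πU_N equals the image of T. In particular this image is independent of the chosen decomposition of U|_N. -/
/-!
Write `u ∈ U^N` as `y + t` with `y ∈ F` and `t ∈ T`; then `y` is `N`-invariant, so its
coordinates in the permutation basis of `F` are constant on `N`-orbits, and `y` is a combination
of orbit sums. Modulo `I_N U` all basis vectors of one orbit become equal, so an orbit sum becomes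
the orbit length times one vector. Since `F` has no trivial summand, no basis vector is fixed by
`N`, so each orbit length is a positive power of `p`, and `p ∈ πR`. Hence `y` dies in
`U_N / πU_N`, and the image of `u` is that of `t`.
-/

open Pointwise

/-- The augmentation submodule `I_N·U` of an `R`-linear `G`-representation `U`:
the `R`-span of the elements `n·u - u` for `n ∈ N`, `u ∈ U`. -/
def augSub {R G U : Type} [CommRing R] [Group G] [AddCommGroup U] [Module R U]
    (ρ : Representation R G U) (N : Subgroup G) : Submodule R U :=
  Submodule.span R {x : U | ∃ n ∈ N, ∃ u : U, x = ρ n u - u}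

namespace IsPGroup

variable {p : ℕ} [Fact p.Prime] {H ι : Type*} [Group H] [MulAction H ι]

theorem dvd_card_orbit (hH : IsPGroup p H) {i : ι} [Finite (MulAction.orbit H i)]
    (hi : ∃ h : H, h • i ≠ i) : p ∣ Nat.card (MulAction.orbit H i) := by
  obtain ⟨n, hn⟩ := hH.card_orbit i
  obtain ⟨h, hh⟩ := hi
  rcases n with _ | n
  · rw [pow_zero, Nat.card_eq_one_iff_unique] at hn
    have := hn.1.elim ⟨h • i, MulAction.mem_orbit i h⟩ ⟨i, MulAction.mem_orbit_self i⟩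
    exact absurd (congrArg Subtype.val this) hh
  · exact hn ▸ dvd_pow_self p n.succ_ne_zero

theorem sum_eq_zero_of_forall_exists_smul_ne [Fintype ι] {A : Type*} [AddCommMonoid A]
    (hH : IsPGroup p H) (hfree : ∀ i : ι, ∃ h : H, h • i ≠ i) (hA : ∀ a : A, p • a = 0)
    (g : ι → A) (hg : ∀ (h : H) (i : ι), g (h • i) = g i) : ∑ i, g i = 0 := by
  classical
  rw [← (MulAction.selfEquivSigmaOrbits H ι).symm.sum_comp, Fintype.sum_sigma]
  refine Finset.sum_eq_zero fun ω _ => ?_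
  have hconst : ∀ x : MulAction.orbit H ω.out, g x = g ω.out := by
    rintro ⟨_, h, rfl⟩
    exact hg h _
  obtain ⟨k, hk⟩ := hH.dvd_card_orbit (hfree ω.out)
  change ∑ x : MulAction.orbit H ω.out, g x = 0
  rw [Fintype.sum_congr _ _ hconst, Finset.sum_const, Finset.card_univ,
    ← Nat.card_eq_fintype_card, hk, mul_nsmul', hA]

end IsPGroup

namespace Representation

theorem exists_mulAction_of_apply_mem_range {R H U ι : Type*} [CommSemiring R] [Monoid H]
    [AddCommMonoid U] [Module R U] (ρ : Representation R H U) {v : ι → U}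
    (hv : Function.Injective v) (hperm : ∀ h i, ∃ j, ρ h (v i) = v j) :
    ∃ _ : MulAction H ι, ∀ h i, ρ h (v i) = v (h • i) := by
  choose σ hσ using hperm
  refine ⟨{ smul := σ, one_smul := fun i => hv ?one, mul_smul := fun h k i => hv ?mul }, hσ⟩
  case one =>
    change v (σ 1 i) = v i
    rw [← hσ, map_one, Module.End.one_apply]
  case mul =>
    change v (σ (h * k) i) = v (σ h (σ k i))
    rw [← hσ, ← hσ, ← hσ, map_mul, Module.End.mul_apply]

theorem apply_smul_eq_of_sum_mem_invariants {R H U ι : Type*} [CommRing R] [Group H]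
    [AddCommGroup U] [Module R U] [MulAction H ι] [Fintype ι]
    (ρ : Representation R H U) {v : ι → U} (hv : LinearIndependent R v)
    (hρv : ∀ h i, ρ h (v i) = v (h • i)) {c : ι → R}
    (hc : ∑ i, c i • v i ∈ ρ.invariants)
    (h : H) (i : ι) : c (h • i) = c i := by
  have hsum : ∑ j, c (h⁻¹ • j) • v j = ∑ j, c j • v j := by
    conv_rhs => rw [← (ρ.mem_invariants _).1 hc h, map_sum]
    simp only [map_smul, hρv]
    exact (Fintype.sum_equiv (MulAction.toPerm h) _ _ fun j => by simp).symm
  simpa using (Fintype.linearIndependent_iffₛ.1 hv _ _ hsum (h • i)).symm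

end Representation

theorem Submodule.Quotient.smul_eq_zero_of_dvd {R M : Type*} [CommRing R] [AddCommGroup M]
    [Module R M] {a r : R} (h : a ∣ r) (x : M ⧸ a • (⊤ : Submodule R M)) : r • x = 0 := by
  obtain ⟨c, rfl⟩ := h
  induction x using Submodule.Quotient.induction_on with | _ m => ?_
  rw [← Submodule.Quotient.mk_smul, Submodule.Quotient.mk_eq_zero, mul_smul]
  exact Submodule.smul_mem_pointwise_smul _ _ _ trivial

section PermutationModule

variable {R G U ι : Type} [CommRing R] [Group G] [AddCommGroup U] [Module R U]
  {ρ : Representation R G U} {N : Subgroup G}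

theorem exists_smul_ne_of_forall_trivial_summand_eq_bot [Nontrivial R] {F : Submodule R U}
    (b : Module.Basis ι R F) [MulAction N ι] (hb : ∀ (n : N) (i : ι), ρ n (b i) = b (n • i))
    (hF : ∀ W W' : Submodule R U, W ⊔ W' = F → Disjoint W W' →
      (∀ n ∈ N, W.map (ρ n) ≤ W) → (∀ n ∈ N, W'.map (ρ n) ≤ W') →
      (∀ n ∈ N, ∀ w ∈ W, ρ n w = w) → W = ⊥) (i : ι) :
    ∃ n : N, n • i ≠ i := by
  by_contra! hfix
  set v : ι → U := fun j => (b j : U)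
  have hv : LinearIndependent R v := b.linearIndependent.map' F.subtype F.ker_subtype
  have hstable : ∀ s : Set ι, (∀ n : N, ∀ j ∈ s, n • j ∈ s) →
      ∀ n ∈ N, (Submodule.span R (v '' s)).map (ρ n) ≤ Submodule.span R (v '' s) := by
    intro s hs n hn
    rw [Submodule.map_span]
    apply Submodule.span_mono
    rintro _ ⟨_, ⟨j, hj, rfl⟩, rfl⟩
    exact ⟨_, hs ⟨n, hn⟩ j hj, (hb ⟨n, hn⟩ j).symm⟩
  have hsup : Submodule.span R (v '' {i}) ⊔ Submodule.span R (v '' {i}ᶜ) = F := by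
    rw [← Submodule.span_union, ← Set.image_union, Set.union_compl_self, Set.image_univ,
      show Set.range v = F.subtype '' Set.range b from Set.range_comp _ _, ← Submodule.map_span,
      b.span_eq, Submodule.map_top, Submodule.range_subtype]
  have htriv : ∀ n ∈ N, ∀ w ∈ Submodule.span R (v '' {i}), ρ n w = w := by
    intro n hn w hw
    rw [Set.image_singleton] at hw
    obtain ⟨r, rfl⟩ := Submodule.mem_span_singleton.1 hw
    rw [map_smul, hb ⟨n, hn⟩, hfix]
  have hbot := hF _ _ hsup (hv.disjoint_span_image disjoint_compl_right)
    (hstable _ fun n j hj => by rw [hj, hfix]; rfl)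
    (hstable _ fun n j hj hji => hj <| by
      rw [Set.mem_singleton_iff] at hji ⊢
      rw [← inv_smul_smul n j, hji, hfix])
    htriv
  have hvi : v i ∈ Submodule.span R (v '' {i}) :=
    Submodule.subset_span (Set.mem_image_of_mem v (Set.mem_singleton i))
  exact hv.ne_zero i (by rwa [hbot, Submodule.mem_bot] at hvi)

def coinvariantsReduction (ρ : Representation R G U) (N : Subgroup G) (π : R) :
    U →ₗ[R] (U ⧸ augSub ρ N) ⧸ π • (⊤ : Submodule R (U ⧸ augSub ρ N)) :=
  (π • (⊤ : Submodule R (U ⧸ augSub ρ N))).mkQ ∘ₗ (augSub ρ N).mkQ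

theorem coinvariantsReduction_rho_apply {π : R} {n : G} (hn : n ∈ N) (u : U) :
    coinvariantsReduction ρ N π (ρ n u) = coinvariantsReduction ρ N π u := by
  have : ρ n u - u ∈ augSub ρ N := Submodule.subset_span ⟨n, hn, u, rfl⟩
  simp only [coinvariantsReduction, LinearMap.comp_apply, Submodule.mkQ_apply]
  rw [(Submodule.Quotient.eq _).2 this]

theorem coinvariantsReduction_eq_zero_of_mem_invariants {p : ℕ} [Fact p.Prime]
    (hN : IsPGroup p N) {π : R} (hπp : π ∣ (p : R)) [Fintype ι] {F : Submodule R U}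
    (b : Module.Basis ι R F) [MulAction N ι] (hb : ∀ (n : N) (i : ι), ρ n (b i) = b (n • i))
    (hfree : ∀ i : ι, ∃ n : N, n • i ≠ i) {y : U} (hyF : y ∈ F)
    (hy : y ∈ Representation.invariants (ρ.comp N.subtype)) :
    coinvariantsReduction ρ N π y = 0 := by
  set c := b.repr ⟨y, hyF⟩
  have hyc : y = ∑ i, c i • (b i : U) := by
    have := congrArg F.subtype (b.sum_repr ⟨y, hyF⟩)
    simp only [map_sum, map_smul, Submodule.subtype_apply] at this
    exact this.symm
  have hc := Representation.apply_smul_eq_of_sum_mem_invariants (ρ.comp N.subtype)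
    (b.linearIndependent.map' F.subtype F.ker_subtype) hb (hyc ▸ hy)
  rw [hyc, map_sum]
  simp only [map_smul]
  refine hN.sum_eq_zero_of_forall_exists_smul_ne hfree (fun a => ?_) _ fun n i => ?_
  · rw [← Nat.cast_smul_eq_nsmul R]
    exact Submodule.Quotient.smul_eq_zero_of_dvd hπp a
  · rw [hc, ← hb, coinvariantsReduction_rho_apply n.2]

end PermutationModule

theorem stmt_6_general (p : ℕ) (hp : p.Prime) (R G U : Type) [CommRing R] [IsDomain R]
    [IsDiscreteValuationRing R]
    (π : R) (hπ : Ideal.span {π} = IsLocalRing.maximalIdeal R)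
    (hres : (p : R) ∈ IsLocalRing.maximalIdeal R)
    [Group G] (hG : IsPGroup p G)
    (N : Subgroup G)
    [AddCommGroup U] [Module R U] [Module.Finite R U]
    (ρ : Representation R G U)
    (F T : Submodule R U)
    (hcompl : IsCompl F T)
    (hTtriv : ∀ n ∈ N, ∀ t ∈ T, ρ n t = t)
    (hFperm : ∃ (ι : Type) (b : Module.Basis ι R ↥F),
      ∀ n ∈ N, ∀ i : ι, ∃ j, ρ n (↑(b i) : U) = (↑(b j) : U))
    (hFnotriv : ∀ W W' : Submodule R U, W ⊔ W' = F → Disjoint W W' →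
      (∀ n ∈ N, W.map (ρ n) ≤ W) → (∀ n ∈ N, W'.map (ρ n) ≤ W') →
      (∀ n ∈ N, ∀ w ∈ W, ρ n w = w) → W = ⊥) :
    Submodule.map
        ((π • (⊤ : Submodule R (U ⧸ augSub ρ N))).mkQ ∘ₗ (augSub ρ N).mkQ)
        (Representation.invariants (ρ.comp N.subtype))
      = Submodule.map
        ((π • (⊤ : Submodule R (U ⧸ augSub ρ N))).mkQ ∘ₗ (augSub ρ N).mkQ) T := by
  have := Fact.mk hp
  obtain ⟨ι, b, hb⟩ := hFperm
  have := Module.Finite.finite_basis b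
  have := Fintype.ofFinite ι
  obtain ⟨_, hσ⟩ := Representation.exists_mulAction_of_apply_mem_range (ρ.comp N.subtype)
    (Subtype.val_injective.comp b.injective) fun n i => hb n n.2 i
  have hfree := exists_smul_ne_of_forall_trivial_summand_eq_bot b hσ hFnotriv
  have hπp : π ∣ (p : R) := Ideal.mem_span_singleton.1 (hπ ▸ hres)
  have hT : T ≤ Representation.invariants (ρ.comp N.subtype) := fun t ht =>
    (Representation.mem_invariants _ _).2 fun n => hTtriv n n.2 t ht
  change Submodule.map (coinvariantsReduction ρ N π) _ =
    Submodule.map (coinvariantsReduction ρ N π) T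
  refine le_antisymm ?_ (Submodule.map_mono hT)
  rintro _ ⟨u, hu, rfl⟩
  obtain ⟨y, hyF, t, ht, rfl⟩ :=
    Submodule.mem_sup.1 (hcompl.sup_eq_top ▸ Submodule.mem_top : u ∈ F ⊔ T)
  have hy : y ∈ Representation.invariants (ρ.comp N.subtype) := by
    simpa using sub_mem hu (hT ht)
  rw [map_add, coinvariantsReduction_eq_zero_of_mem_invariants (hG.to_subgroup N) hπp b hσ hfree
    hyF hy, zero_add]
  exact Submodule.mem_map_of_mem ht

/-- Let `G` be a cyclic `p`-group, `N ⊴ G`, and `U` an `RG`-lattice whose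
restriction to `N` is an `RN`-permutation module, with `U|_N = F ⊕ T` where `F` is an
`RN`-permutation module having no trivial direct summands and `T` is a trivial `RN`-lattice
(a maximal trivial summand).  Then the image of the natural composite map
`U^N → U_N → U_N/πU_N` equals the image of `T`; in particular this image is independent of the
chosen decomposition of `U|_N`. -/
theorem stmt_6 (p : ℕ) (hp : p.Prime) (R G U : Type) [CommRing R] [IsDomain R]
    [IsDiscreteValuationRing R] [IsAdicComplete (IsLocalRing.maximalIdeal R) R] [CharZero R]
    (π : R) (hπ : Ideal.span {π} = IsLocalRing.maximalIdeal R)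
    (hres : (p : R) ∈ IsLocalRing.maximalIdeal R)
    [Group G] [Fintype G] (hG : IsPGroup p G) (hcyc : IsCyclic G)
    (N : Subgroup G) [N.Normal]
    [AddCommGroup U] [Module R U] [Module.Finite R U] [Module.Free R U]
    (ρ : Representation R G U)
    (F T : Submodule R U)
    (hcompl : IsCompl F T)
    (hFinv : ∀ n ∈ N, F.map (ρ n) ≤ F)
    (hTtriv : ∀ n ∈ N, ∀ t ∈ T, ρ n t = t)
    (hFperm : ∃ (ι : Type) (b : Module.Basis ι R ↥F),
      ∀ n ∈ N, ∀ i : ι, ∃ j, ρ n (↑(b i) : U) = (↑(b j) : U))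
    (hFnotriv : ∀ W W' : Submodule R U, W ⊔ W' = F → Disjoint W W' →
      (∀ n ∈ N, W.map (ρ n) ≤ W) → (∀ n ∈ N, W'.map (ρ n) ≤ W') →
      (∀ n ∈ N, ∀ w ∈ W, ρ n w = w) → W = ⊥) :
    Submodule.map
        ((π • (⊤ : Submodule R (U ⧸ augSub ρ N))).mkQ ∘ₗ (augSub ρ N).mkQ)
        (Representation.invariants (ρ.comp N.subtype))
      = Submodule.map
        ((π • (⊤ : Submodule R (U ⧸ augSub ρ N))).mkQ ∘ₗ (augSub ρ N).mkQ) T :=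
  stmt_6_general p hp R G U π hπ hres hG N ρ F T hcompl hTtriv hFperm hFnotriv
end

section
/- Let G be a cyclic group of order p², N its subgroup of order p, R a complete discrete valuation ring in mixed characteristic, and U an RG-lattice such that U|_N is an RN-permutation module, U_N is an RG-lattice (R-torsion-free), and U^N = Y ⊕ X as RG-modules with N acting trivially on X and X maximal trivial. Then X ∩ N̂U = pX, where N̂ = Σ_{n∈N} n. -/
/-!
Let `g` generate `G` and put `A = ρ g`, `S = 1 + A + ⋯ + A^(p-1)`; then `N = ⟨g^p⟩` and `N̂`
commutes with `A`. If `x = N̂ u` lies in `X`, then `N̂ ((A - 1) u) = (A - 1) x = 0`, and since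
`U_N` is torsion-free, `ker N̂ ⊆ I_N U = (A^p - 1) U`, say `(A - 1) u = (A^p - 1) w`. Summing the
geometric series, `v = u - S w` is `N`-invariant, so `x = N̂ v + N̂ S w = p v + S (N̂ w)`. Since
`v` and `N̂ w` lie in `U^N = Y ⊕ X`, and `A` fixes `X` and stabilises `Y`, both terms lie in
`Y + pX`, and the modular law gives `X ∩ (Y + pX) = pX`.
-/

open Pointwise

open Finset Subgroup

theorem Subgroup.mem_zpowers_pow_of_pow_eq_one {G : Type*} [Group G] {g x : G} {m k : ℕ}
    (hx : x ∈ zpowers g) (hord : orderOf g = m * k) (hk : k ≠ 0) (hxk : x ^ k = 1) :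
    x ∈ zpowers (g ^ m) := by
  obtain ⟨i, rfl⟩ := hx
  have hdvd : ((m * k : ℕ) : ℤ) ∣ i * k := by
    rw [← hord, orderOf_dvd_iff_zpow_eq_one, zpow_mul, zpow_natCast, hxk]
  obtain ⟨j, rfl⟩ : (m : ℤ) ∣ i := by
    push_cast at hdvd
    exact (mul_dvd_mul_iff_right (Int.natCast_ne_zero.mpr hk)).mp hdvd
  exact ⟨j, by simp [zpow_mul]⟩

theorem Subgroup.eq_zpowers_pow_of_natCard_eq {G : Type*} [Group G] [Finite G] {g : G}
    {m k : ℕ} (hg : ∀ x, x ∈ zpowers g) (hord : orderOf g = m * k) {N : Subgroup G}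
    (hN : Nat.card N = k) : N = zpowers (g ^ m) := by
  have hmk : m * k ≠ 0 := hord ▸ (orderOf_pos g).ne'
  have hm : m ≠ 0 := left_ne_zero_of_mul hmk
  refine eq_of_le_of_card_ge (fun x hx => ?_) ?_
  · refine mem_zpowers_pow_of_pow_eq_one (hg x) hord (right_ne_zero_of_mul hmk) ?_
    rw [← hN]
    exact orderOf_dvd_iff_pow_eq_one.mp (N.orderOf_dvd_natCard hx)
  · rw [Nat.card_zpowers, orderOf_pow_of_dvd hm (hord ▸ dvd_mul_right m k), hord,
      Nat.mul_div_cancel_left _ (Nat.pos_of_ne_zero hm), hN]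

theorem Module.End.pow_apply_sub_geom_sum {R U : Type*} [Semiring R] [AddCommGroup U]
    [Module R U] {A : Module.End R U} {p : ℕ} {u w : U} (h : (A - 1) u = (A ^ p - 1) w) :
    (A ^ p) (u - (∑ i ∈ range p, A ^ i) w) = u - (∑ i ∈ range p, A ^ i) w := by
  set S := ∑ i ∈ range p, A ^ i
  have hcomm : Commute S (A ^ p - 1) :=
    Commute.sum_left _ _ _ fun i _ => (Commute.pow_pow_self A i p).sub_right (Commute.one_right _)
  have key : (A ^ p - 1) u = (A ^ p - 1) (S w) :=
    calc (A ^ p - 1) u = (S * (A - 1)) u := by rw [geom_sum_mul]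
      _ = S ((A ^ p - 1) w) := by rw [Module.End.mul_apply, h]
      _ = (A ^ p - 1) (S w) := by rw [← Module.End.mul_apply, hcomm.eq, Module.End.mul_apply]
  simp only [LinearMap.sub_apply, Module.End.one_apply] at key
  rw [map_sub]
  exact sub_eq_sub_iff_sub_eq_sub.mp key

namespace Submodule

variable {R U : Type*} [CommRing R] [AddCommGroup U] [Module R U] {X Y : Submodule R U}

theorem inf_sup_smul_of_disjoint (hdisj : Disjoint Y X) (c : R) :
    X ⊓ (Y ⊔ c • X) = c • X := by
  rw [← inf_sup_assoc_of_le Y (smul_le_self_of_tower c X), hdisj.symm.eq_bot, bot_sup_eq]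

theorem smul_mem_sup_smul {v : U} (hv : v ∈ Y ⊔ X) (c : R) : c • v ∈ Y ⊔ c • X := by
  obtain ⟨y, hy, x, hx, rfl⟩ := mem_sup.mp hv
  rw [smul_add]
  exact add_mem_sup (Y.smul_mem c hy) (smul_mem_pointwise_smul x c X hx)

theorem geom_sum_apply_mem_sup_smul {A : Module.End R U} (hY : Y.map A ≤ Y)
    (hX : ∀ x ∈ X, A x = x) (p : ℕ) {z : U} (hz : z ∈ Y ⊔ X) :
    (∑ i ∈ range p, A ^ i) z ∈ Y ⊔ (p : R) • X := by
  obtain ⟨y, hy, x, hx, rfl⟩ := mem_sup.mp hz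
  have hYpow : ∀ i : ℕ, (A ^ i) y ∈ Y := fun i => by
    induction i with
    | zero => simpa using hy
    | succ i ih => rw [pow_succ', Module.End.mul_apply]; exact hY (mem_map_of_mem ih)
  have hXsum : (∑ i ∈ range p, A ^ i) x = (p : R) • x := by
    simp [LinearMap.sum_apply, Module.End.pow_apply, Function.iterate_fixed (hX x hx),
      Nat.cast_smul_eq_nsmul]
  rw [map_add, hXsum]
  refine add_mem_sup ?_ (smul_mem_pointwise_smul x _ X hx)
  rw [LinearMap.sum_apply]
  exact sum_mem fun i _ => hYpow i

end Submodule

namespace Representation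

variable {k G V : Type*} [CommRing k] [Group G] [Fintype G] [AddCommGroup V] [Module k V]
  (ρ : Representation k G V)

theorem norm_apply_of_mem_invariants {v : V} (hv : v ∈ ρ.invariants) :
    ρ.norm v = (Fintype.card G : k) • v := by
  simp [norm, LinearMap.sum_apply, hv _, Nat.cast_smul_eq_nsmul]

theorem norm_apply_mem_invariants (v : V) : ρ.norm v ∈ ρ.invariants :=
  fun g => ρ.self_norm_apply g v

theorem norm_apply_sub_smul_mem_coinvariantsKer (v : V) :
    ρ.norm v - (Fintype.card G : k) • v ∈ Coinvariants.ker ρ := by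
  have hsum : ρ.norm v - (Fintype.card G : k) • v = ∑ g : G, (ρ g v - v) := by
    simp [norm, LinearMap.sum_apply, sum_sub_distrib, Nat.cast_smul_eq_nsmul]
  rw [hsum]
  exact sum_mem fun g _ => Coinvariants.sub_mem_ker g v

theorem ker_norm_le_coinvariantsKer [NoZeroSMulDivisors k (V ⧸ Coinvariants.ker ρ)]
    (hcard : (Fintype.card G : k) ≠ 0) : LinearMap.ker ρ.norm ≤ Coinvariants.ker ρ := by
  intro v hv
  have hmem := ρ.norm_apply_sub_smul_mem_coinvariantsKer v
  rw [LinearMap.mem_ker.mp hv, zero_sub, neg_mem_iff, ← Submodule.Quotient.mk_eq_zero,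
    Submodule.Quotient.mk_smul] at hmem
  exact (Submodule.Quotient.mk_eq_zero _).mp
    ((NoZeroSMulDivisors.eq_zero_or_eq_zero_of_smul_eq_zero hmem).resolve_left hcard)

theorem commute_norm {f : Module.End k V} (hf : ∀ g, Commute f (ρ g)) : Commute f ρ.norm :=
  Commute.sum_right _ _ _ fun g _ => hf g

end Representation

theorem augSub_eq_coinvariantsKer {R G U : Type} [CommRing R] [Group G] [AddCommGroup U]
    [Module R U] (ρ : Representation R G U) (N : Subgroup G) :
    augSub ρ N = Representation.Coinvariants.ker (ρ.comp N.subtype) := by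
  refine congrArg (Submodule.span R) (Set.ext fun x => ⟨?_, ?_⟩)
  · rintro ⟨n, hn, u, rfl⟩
    exact ⟨(⟨n, hn⟩, u), rfl⟩
  · rintro ⟨⟨n, u⟩, rfl⟩
    exact ⟨n, n.2, u, rfl⟩

theorem Representation.inf_range_norm_eq_smul {R G U : Type} [CommRing R] [Group G]
    [AddCommGroup U] [Module R U] (ρ : Representation R G U) {p : ℕ} (hp : (p : R) ≠ 0) (g : G)
    {N : Subgroup G} [Fintype N] (hN : N = zpowers (g ^ p)) (hcard : Fintype.card N = p)
    (hUN : NoZeroSMulDivisors R (U ⧸ augSub ρ N)) {X Y : Submodule R U}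
    (hsup : Y ⊔ X = Representation.invariants (ρ.comp N.subtype)) (hdisj : Disjoint Y X)
    (hY : Y.map (ρ g) ≤ Y) (hX : ∀ x ∈ X, ρ g x = x) :
    X ⊓ LinearMap.range (Representation.norm (ρ.comp N.subtype)) = (p : R) • X := by
  subst hN
  set ρN : Representation R (zpowers (g ^ p)) U := ρ.comp (zpowers (g ^ p)).subtype
  set A := ρ g
  set h : zpowers (g ^ p) := ⟨g ^ p, mem_zpowers _⟩
  have hgen : ∀ n, n ∈ zpowers h := by
    rintro ⟨_, k, rfl⟩
    exact ⟨k, Subtype.ext (by simp [h])⟩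
  have hρN : ρN h = A ^ p := map_pow ρ g p
  have hcomm : Commute A ρN.norm := ρN.commute_norm fun ⟨_, k, hk⟩ => by
    subst hk
    exact ((Commute.self_pow g p).zpow_right k).map ρ
  have hnorm : ∀ v ∈ ρN.invariants, ρN.norm v = (p : R) • v := fun v hv => by
    rw [ρN.norm_apply_of_mem_invariants hv, hcard]
  refine le_antisymm ?_ fun _ hx => ?_
  · rintro _ ⟨hxX, u, rfl⟩
    have hker : (A - 1) u ∈ LinearMap.ker ρN.norm := by
      rw [LinearMap.mem_ker, ← Module.End.mul_apply, ← (hcomm.sub_left (Commute.one_left _)).eq,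
        Module.End.mul_apply, LinearMap.sub_apply, hX _ hxX, Module.End.one_apply, sub_self]
    rw [augSub_eq_coinvariantsKer] at hUN
    obtain ⟨w, hw⟩ : (A - 1) u ∈ LinearMap.range (A ^ p - 1) := by
      rw [← hρN, Module.End.one_eq_id, ← FiniteCyclicGroup.coinvariantsKer_eq_range ρN h hgen]
      exact ρN.ker_norm_le_coinvariantsKer (by rwa [hcard]) hker
    set S := ∑ i ∈ range p, A ^ i
    have hv : u - S w ∈ ρN.invariants := by
      rw [ρN.mem_invariants_iff_of_forall_mem_zpowers h hgen, hρN]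
      exact Module.End.pow_apply_sub_geom_sum hw.symm
    have hS : Commute S ρN.norm := Commute.sum_left _ _ _ fun i _ => hcomm.pow_left i
    have hx : ρN.norm u = (p : R) • (u - S w) + S (ρN.norm w) :=
      calc ρN.norm u = ρN.norm (u - S w) + ρN.norm (S w) := by rw [← map_add, sub_add_cancel]
        _ = _ := by rw [hnorm _ hv, ← Module.End.mul_apply, ← hS.eq, Module.End.mul_apply]
    rw [← Submodule.inf_sup_smul_of_disjoint hdisj]
    refine ⟨hxX, hx ▸ add_mem (Submodule.smul_mem_sup_smul (hsup ▸ hv) _) ?_⟩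
    exact Submodule.geom_sum_apply_mem_sup_smul hY hX p (hsup ▸ ρN.norm_apply_mem_invariants w)
  · obtain ⟨x, hxX, rfl⟩ := (Submodule.mem_smul_pointwise_iff_exists _ _ _).mp hx
    have hxinv : x ∈ ρN.invariants := hsup ▸ Submodule.mem_sup_right hxX
    exact ⟨X.smul_mem _ hxX, x, hnorm x hxinv⟩

theorem stmt_8_general (p : ℕ) (hp : p.Prime) (R G U : Type) [CommRing R] [CharZero R]
    [Group G] [Fintype G] (hcyc : IsCyclic G) (hcard : Fintype.card G = p ^ 2)
    (N : Subgroup G) [Fintype ↥N] (hN : Fintype.card ↥N = p)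
    [AddCommGroup U] [Module R U]
    (ρ : Representation R G U)
    -- U_N is R-torsion-free
    (hUN : NoZeroSMulDivisors R (U ⧸ augSub ρ N))
    (X Y : Submodule R U)
    (hsup : Y ⊔ X = Representation.invariants (ρ.comp N.subtype))
    (hdisj : Disjoint Y X)
    (hYinv : ∀ g : G, Y.map (ρ g) ≤ Y)
    (hXtriv : ∀ (g : G), ∀ x ∈ X, ρ g x = x) :
    X ⊓ LinearMap.range (∑ n : ↥N, ρ (↑n : G)) = (p : R) • X := by
  obtain ⟨g, hg⟩ := hcyc.exists_generator
  have hord : orderOf g = p * p := by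
    rw [orderOf_eq_card_of_forall_mem_zpowers hg, Nat.card_eq_fintype_card, hcard, sq]
  have hNg : N = zpowers (g ^ p) :=
    eq_zpowers_pow_of_natCard_eq hg hord (by rw [Nat.card_eq_fintype_card, hN])
  exact ρ.inf_range_norm_eq_smul (Nat.cast_ne_zero.mpr hp.ne_zero) g hNg hN hUN hsup hdisj
    (hYinv g) (hXtriv g)

/-- Let `G` be cyclic of order `p²`, `N` its subgroup of order `p`, `R` a
complete discrete valuation ring in mixed characteristic, and `U` an `RG`-lattice such that
`U|_N` is an `RN`-permutation module, `U_N` is `R`-torsion-free, and `U^N = Y ⊕ X` as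
`RG`-modules with `G` acting trivially on `X` and `X` a maximal trivial summand (`Y` has no
nonzero trivial `RG`-direct summand).  Then `X ⊓ N̂U = pX`, where `N̂ = Σ_{n∈N} n`. -/
theorem stmt_8 (p : ℕ) (hp : p.Prime) (R G U : Type) [CommRing R] [IsDomain R]
    [IsDiscreteValuationRing R] [IsAdicComplete (IsLocalRing.maximalIdeal R) R] [CharZero R]
    (hres : (p : R) ∈ IsLocalRing.maximalIdeal R)
    [Group G] [Fintype G] (hcyc : IsCyclic G) (hcard : Fintype.card G = p ^ 2)
    (N : Subgroup G) [Fintype ↥N] (hN : Fintype.card ↥N = p)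
    [AddCommGroup U] [Module R U] [Module.Finite R U] [Module.Free R U]
    (ρ : Representation R G U)
    -- U restricted to N is an RN-permutation module
    (hperm : ∃ (ι : Type) (b : Module.Basis ι R U), ∀ n ∈ N, ∀ i : ι, ∃ j, ρ n (b i) = b j)
    -- U_N is R-torsion-free
    (hUN : NoZeroSMulDivisors R (U ⧸ augSub ρ N))
    (X Y : Submodule R U)
    (hsup : Y ⊔ X = Representation.invariants (ρ.comp N.subtype))
    (hdisj : Disjoint Y X)
    (hXinv : ∀ g : G, X.map (ρ g) ≤ X) (hYinv : ∀ g : G, Y.map (ρ g) ≤ Y)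
    (hXtriv : ∀ (g : G), ∀ x ∈ X, ρ g x = x)
    -- X is a maximal trivial summand: Y has no nonzero trivial RG-direct summand
    (hmax : ∀ W W' : Submodule R U, W ⊔ W' = Y → Disjoint W W' →
      (∀ g : G, W.map (ρ g) ≤ W) → (∀ g : G, W'.map (ρ g) ≤ W') →
      (∀ (g : G), ∀ w ∈ W, ρ g w = w) → W = ⊥) :
    X ⊓ LinearMap.range (∑ n : ↥N, ρ (↑n : G)) = (p : R) • X :=
  stmt_8_general p hp R G U hcyc hcard N hN ρ hUN X Y hsup hdisj hYinv hXtriv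
end

section
/- Let G be a cyclic group of order p², N its subgroup of order p, and U an RG-lattice such that: (1) U|_N is an RN-permutation module and U^N = Y ⊕ X as RG-modules with X a maximal trivial summand; (2) U_N and U_G are R-torsion-free. Then there is a decomposition of U restricted to N as U|_N = F ⊕ Z ⊕ X, where F is RN-free and Z ⊕ X is a maximal trivial RN-summand of U|_N. -/
open Pointwise

/-!
Let `g` generate `G`, so that `τ = σ ^ p` generates `N` for `σ = ρ g`; let `ν` be the norm
of `N` and `ν' = 1 + σ + ⋯ + σ ^ (p - 1)`. As `N` has prime order, the permutation basis
splits `U|_N = F ⊕ T` with `F` free (spanned by the basis vectors that `N` moves) and `T`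
trivial, and every `N`-fixed vector of `F` is a norm `ν f` with `f ∈ F`.

Torsion-freeness of `U_N` gives `ker ν ⊆ (τ - 1) U`; together with `(σ - 1) ν' = τ - 1` this
shows that a `G`-fixed `a` with `p a = ν ν' f + p ν' t`, `t ∈ U^N`, is `ν' w` for some
`w ∈ U^N`. If moreover `a ∈ X`, splitting `w = y + x` along `U^N = Y ⊕ X` forces
`ν' y ∈ Y ∩ X = 0`, so `a ∈ p X`. Applied to `a ∈ X ∩ F` this gives `X ∩ F = p (X ∩ F)`, hence
`X ∩ F = 0` by Nakayama; applied to the projection of `X` to `T` along `F` it shows that this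
projection is `p`-pure in `T`, so over the discrete valuation ring `R` it has a complement `Z`
in `T`, and `U = F ⊕ Z ⊕ X`. Finally a trivial summand `W` of `F = W ⊕ W'` satisfies
`W = p W` (write `w = ν (w₁ + w₂)`), so it vanishes by Nakayama again.
-/

universe u

open IsLocalRing

section CommutativeAlgebra

variable {R M : Type*} [CommRing R] [AddCommGroup M] [Module R M]

theorem Submodule.eq_bot_of_forall_eq_smul [IsLocalRing R] [IsNoetherianRing R]
    [Module.Finite R M] {r : R} (hr : r ∈ maximalIdeal R) {S : Submodule R M}
    (h : ∀ x ∈ S, ∃ y ∈ S, x = r • y) : S = ⊥ := by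
  refine eq_bot_of_le_smul_of_le_jacobson_bot (maximalIdeal R) S (IsNoetherian.noetherian S)
    (fun x hx => ?_) ?_
  · obtain ⟨y, hy, rfl⟩ := h x hx
    exact Submodule.smul_mem_smul hr hy
  · rw [jacobson_eq_maximalIdeal ⊥ bot_ne_top]

theorem IsCompl.mem_of_smul_mem [IsDomain R] [Module.IsTorsionFree R M]
    {F T : Submodule R M} (hFT : IsCompl F T) {r : R} (hr : r ≠ 0) {x : M} (hx : r • x ∈ F) :
    x ∈ F := by
  have := Submodule.projection_apply_of_mem_right hFT.symm hx
  rw [map_smul, smul_eq_zero_iff_right hr] at this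
  exact (Submodule.projection_apply_eq_zero_iff hFT.symm).mp this

theorem Submodule.sup_sup_eq_top_and_disjoint_of_map_projection {F T X Z : Submodule R M}
    (hFT : IsCompl F T) (hXF : Disjoint X F) (hZT : Z ≤ T)
    (hsup : X.map (T.projection F hFT.symm) ⊔ Z = T)
    (hdisj : Disjoint (X.map (T.projection F hFT.symm)) Z) :
    F ⊔ Z ⊔ X = ⊤ ∧ Disjoint F (Z ⊔ X) ∧ Disjoint Z X := by
  set π := T.projection F hFT.symm
  have hπF : ∀ x, x - π x ∈ F := fun x => by
    rw [Submodule.projection_eq_self_sub_projection hFT, sub_sub_cancel]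
    exact Submodule.projection_apply_mem hFT x
  have hπX : ∀ x ∈ X, π x ∈ X.map π := fun x hx => Submodule.mem_map_of_mem hx
  refine ⟨eq_top_iff.mpr fun u _ => ?_, Submodule.disjoint_def.mpr fun u hu hZX => ?_,
    Submodule.disjoint_def.mpr fun z hz hzX => ?_⟩
  · obtain ⟨_, ⟨x, hx, rfl⟩, z, hz, hxz⟩ :=
      Submodule.mem_sup.mp
        (hsup ▸ Submodule.projection_apply_mem hFT.symm u : π u ∈ X.map π ⊔ Z)
    have hu : u = (u - π u) - (x - π x) + z + x := by rw [← hxz]; abel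
    rw [hu]
    exact Submodule.add_mem_sup (Submodule.add_mem_sup (F.sub_mem (hπF u) (hπF x)) hz) hx
  · obtain ⟨z, hz, x, hx, rfl⟩ := Submodule.mem_sup.mp hZX
    have hπ0 : z + π x = 0 := by
      rw [← Submodule.projection_apply_of_mem_left hFT.symm (hZT hz), ← map_add]
      exact Submodule.projection_apply_of_mem_right hFT.symm hu
    have hz0 : z = 0 := Submodule.disjoint_def.mp hdisj.symm z hz <| by
      rw [eq_neg_of_add_eq_zero_left hπ0]
      exact (X.map π).neg_mem (hπX x hx)
    rw [hz0, zero_add] at hπ0 ⊢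
    exact Submodule.disjoint_def.mp hXF x hx
      ((Submodule.projection_apply_eq_zero_iff hFT.symm).mp hπ0)
  · refine Submodule.disjoint_def.mp hdisj.symm z hz ?_
    rw [← Submodule.projection_apply_of_mem_left hFT.symm (hZT hz)]
    exact hπX z hzX

theorem Submodule.exists_isCompl_of_isTorsionFree_quotient [IsDomain R] [IsPrincipalIdealRing R]
    [Module.Finite R M] (W : Submodule R M) [Module.IsTorsionFree R (M ⧸ W)] :
    ∃ Z, IsCompl W Z := by
  -- `M ⧸ W` is finite and torsion-free over a PID, hence free and so projective
  obtain ⟨s, hs⟩ := Module.projective_lifting_property W.mkQ LinearMap.id W.mkQ_surjective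
  have hs' : ∀ q, W.mkQ (s q) = q := LinearMap.congr_fun hs
  let f : M →ₗ[R] W := (LinearMap.id - s ∘ₗ W.mkQ).codRestrict W fun x =>
    (Submodule.Quotient.mk_eq_zero W).mp <| by
      change W.mkQ _ = 0
      simp only [LinearMap.sub_apply, LinearMap.id_apply, LinearMap.comp_apply, map_sub, hs',
        sub_self]
  refine ⟨LinearMap.ker f, LinearMap.isCompl_of_proj fun w => Subtype.ext ?_⟩
  have hw : W.mkQ w = 0 := (W.mkQ_apply _).trans ((Submodule.Quotient.mk_eq_zero W).mpr w.2)
  simp only [f, LinearMap.codRestrict_apply, LinearMap.sub_apply, LinearMap.id_apply,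
    LinearMap.comp_apply, hw, map_zero, sub_zero]

variable [IsDomain R] [IsDiscreteValuationRing R]

theorem IsDiscreteValuationRing.isTorsionFree_of_smul_eq_zero {r : R}
    (hr : r ∈ IsLocalRing.maximalIdeal R) (h : ∀ m : M, r • m = 0 → m = 0) :
    Module.IsTorsionFree R M := by
  obtain ⟨ϖ, hϖ⟩ := exists_irreducible R
  obtain ⟨c, rfl⟩ : ϖ ∣ r := by
    rwa [(irreducible_iff_uniformizer ϖ).mp hϖ, Ideal.mem_span_singleton] at hr
  have hϖpow : ∀ n : ℕ, ∀ m : M, ϖ ^ n • m = 0 → m = 0 := by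
    intro n
    induction n with
    | zero => simp
    | succ n ih =>
      intro m hm
      refine ih m (h _ ?_)
      rw [mul_comm, mul_smul, ← mul_smul ϖ, ← pow_succ', hm, smul_zero]
  refine Module.isTorsionFree_iff_smul_eq_zero.mpr fun s m hsm =>
    or_iff_not_imp_left.mpr fun hs => ?_
  obtain ⟨n, u, rfl⟩ := eq_unit_mul_pow_irreducible hs hϖ
  rw [mul_smul] at hsm
  exact hϖpow n m (u.isUnit.smul_eq_zero.mp hsm)

theorem Submodule.exists_sup_eq_disjoint_of_smul_mem [Module.Finite R M] {r : R}
    (hr : r ∈ maximalIdeal R) {W T : Submodule R M} (hWT : W ≤ T)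
    (hpure : ∀ t ∈ T, r • t ∈ W → t ∈ W) : ∃ Z ≤ T, W ⊔ Z = T ∧ Disjoint W Z := by
  set W' := W.comap T.subtype
  have hW : W'.map T.subtype = W := by rw [Submodule.map_comap_subtype, inf_eq_right.mpr hWT]
  have : Module.IsTorsionFree R (T ⧸ W') := by
    refine IsDiscreteValuationRing.isTorsionFree_of_smul_eq_zero hr fun q hq => ?_
    obtain ⟨t, rfl⟩ := W'.mkQ_surjective q
    rw [← map_smul, Submodule.mkQ_apply, Submodule.Quotient.mk_eq_zero] at hq
    rw [Submodule.mkQ_apply, Submodule.Quotient.mk_eq_zero]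
    exact hpure t t.2 hq
  obtain ⟨Z', hZ'⟩ := W'.exists_isCompl_of_isTorsionFree_quotient
  refine ⟨Z'.map T.subtype, T.map_subtype_le Z', ?_, ?_⟩
  · rw [← hW, ← Submodule.map_sup, hZ'.sup_eq_top, Submodule.map_subtype_top]
  · rw [← hW]
    exact Submodule.disjoint_map T.injective_subtype hZ'.disjoint

end CommutativeAlgebra

open MulAction in
theorem MulAction.eq_one_of_smul_eq_of_prime_card {N ι : Type*} [Group N] [MulAction N ι]
    (hN : (Nat.card N).Prime) {i : ι} (hi : i ∉ fixedPoints N ι) {n : N} (hn : n • i = i) :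
    n = 1 := by
  have : Fact (Nat.card N).Prime := ⟨hN⟩
  rcases (stabilizer N i).eq_bot_or_eq_top_of_prime_card with h | h
  · exact Subgroup.mem_bot.mp (h ▸ mem_stabilizer_iff.mpr hn)
  · exact absurd (fun m => mem_stabilizer_iff.mp (h ▸ Subgroup.mem_top m)) hi

open MulAction in
theorem MulAction.exists_equiv_prod_sum_fixedPoints {N : Type*} {ι : Type u} [Group N]
    [MulAction N ι] (hfree : ∀ i ∉ fixedPoints N ι, ∀ n : N, n • i = i → n = 1) :
    ∃ (κ τ : Type u) (e : (κ × N) ⊕ τ ≃ ι),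
      (∀ (n m : N) k, n • e (.inl (k, m)) = e (.inl (k, n * m))) ∧
        ∀ (n : N) t, n • e (.inr t) = e (.inr t) := by
  have hfix : ∀ (m : N) (i : ι), m • i ∈ fixedPoints N ι → i ∈ fixedPoints N ι := by
    intro m i h
    rwa [← inv_smul_smul m i, h m⁻¹]
  let κ := {ω : orbitRel.Quotient N ι // ω.out ∉ fixedPoints N ι}
  let f : (κ × N) ⊕ fixedPoints N ι → ι := Sum.elim (fun k => k.2 • k.1.1.out) (↑)
  have hf : f.Bijective := by
    refine ⟨?_, fun i => ?_⟩
    · rintro (⟨⟨ω, hω⟩, m⟩ | ⟨i, hi⟩) (⟨⟨ω', hω'⟩, m'⟩ | ⟨i', hi'⟩) h <;>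
        simp only [f, Sum.elim_inl, Sum.elim_inr] at h
      · obtain rfl : ω = ω' := by
          rw [← ω.out_eq, ← ω'.out_eq]
          exact Quotient.sound
            ⟨m⁻¹ * m', show (m⁻¹ * m') • _ = _ by rw [mul_smul, ← h, inv_smul_smul]⟩
        have := hfree _ hω (m'⁻¹ * m) (by rw [mul_smul, h, inv_smul_smul])
        rw [inv_mul_eq_one.mp this]
      · exact absurd (hfix m _ (h ▸ hi')) hω
      · exact absurd (hfix m' _ (h ▸ hi)) hω'
      · exact congrArg Sum.inr (Subtype.ext h)
    · by_cases hi : i ∈ fixedPoints N ι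
      · exact ⟨.inr ⟨i, hi⟩, rfl⟩
      obtain ⟨m, hm⟩ : (⟦i⟧ : orbitRel.Quotient N ι).out ∈ orbit N i :=
        orbitRel_apply.mp (Quotient.exact (Quotient.out_eq _))
      have hi' : i = m⁻¹ • (⟦i⟧ : orbitRel.Quotient N ι).out := by rw [← hm, inv_smul_smul]
      exact ⟨.inl (⟨⟦i⟧, fun h => hi (hi' ▸ (h m⁻¹).symm ▸ h)⟩, m⁻¹), hi'.symm⟩
  refine ⟨κ, fixedPoints N ι, Equiv.ofBijective f hf, fun n m k => ?_, fun n t => t.2 n⟩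
  simp [f, mul_smul]

namespace Representation

variable {R U N : Type*} [CommRing R] [AddCommGroup U] [Module R U] [Group N]
  {ρ : Representation R N U}

theorem exists_mulAction_of_permutes_basis [Nontrivial R] {ι : Type*} {b : Module.Basis ι R U}
    (hb : ∀ n i, ∃ j, ρ n (b i) = b j) :
    ∃ _ : MulAction N ι, ∀ (n : N) i, ρ n (b i) = b (n • i) := by
  choose act hact using hb
  exact ⟨{ smul := act
           one_smul := fun i => b.injective <| show b (act 1 i) = b i by
             rw [← hact, map_one, Module.End.one_apply]
           mul_smul := fun n m i => b.injective <|
             show b (act (n * m) i) = b (act n (act m i)) by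
               rw [← hact, ← hact, ← hact, map_mul, Module.End.mul_apply] },
    hact⟩

section RegularBasis

variable {κ τ : Type*} {b : Module.Basis ((κ × N) ⊕ τ) R U}
  (hF : ∀ n m k, ρ n (b (.inl (k, m))) = b (.inl (k, n * m)))
  (hT : ∀ n t, ρ n (b (.inr t)) = b (.inr t))

include hF in
theorem map_span_inl_le (n : N) :
    (Submodule.span R (b '' Set.range .inl)).map (ρ n) ≤
      Submodule.span R (b '' Set.range .inl) := by
  rw [Submodule.map_span]
  refine Submodule.span_mono ?_
  rintro _ ⟨_, ⟨_, ⟨⟨k, m⟩, rfl⟩, rfl⟩, rfl⟩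
  exact ⟨_, ⟨(k, n * m), rfl⟩, (hF n m k).symm⟩

include hT in
theorem apply_eq_self_of_mem_span_inr (n : N) {x : U}
    (hx : x ∈ Submodule.span R (b '' Set.range .inr)) : ρ n x = x := by
  have : Submodule.span R (b '' Set.range .inr) ≤ LinearMap.ker (ρ n - 1) := by
    rw [Submodule.span_le]
    rintro _ ⟨_, ⟨t, rfl⟩, rfl⟩
    simp [hT]
  simpa [sub_eq_zero] using this hx

include hF hT

theorem repr_apply_inl_mul (n m : N) (k : κ) (x : U) :
    b.repr (ρ n x) (.inl (k, n * m)) = b.repr x (.inl (k, m)) := by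
  classical
  have := b.ext (f₁ := Finsupp.lapply (.inl (k, n * m)) ∘ₗ b.repr.toLinearMap ∘ₗ ρ n)
    (f₂ := Finsupp.lapply (.inl (k, m)) ∘ₗ b.repr.toLinearMap) ?_
  · exact LinearMap.congr_fun this x
  rintro (⟨k', m'⟩ | t)
  · simp [hF, Finsupp.single_apply]
  · simp [hT]

theorem exists_norm_eq_of_mem_span_inl [Fintype κ] [Fintype τ] [Fintype N] {x : U}
    (hx : x ∈ Submodule.span R (b '' Set.range .inl)) (hfix : ∀ n, ρ n x = x) :
    ∃ f ∈ Submodule.span R (b '' Set.range .inl), ρ.norm f = x := by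
  set c : κ → R := fun k => b.repr x (.inl (k, 1))
  have hc : ∀ k m, b.repr x (.inl (k, m)) = c k := fun k m => by
    simpa [hfix] using repr_apply_inl_mul hF hT m 1 k x
  have hτ : ∀ t, b.repr x (.inr t) = 0 := fun t => by
    by_contra h
    simpa using b.mem_span_image.mp hx (Finsupp.mem_support_iff.mpr h)
  refine ⟨∑ k, c k • b (.inl (k, 1)), Submodule.sum_mem _ fun k _ =>
    Submodule.smul_mem _ _ (Submodule.subset_span ⟨_, ⟨_, rfl⟩, rfl⟩), ?_⟩
  conv_rhs => rw [← b.sum_repr x]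
  simp only [Fintype.sum_sum_type, hτ, zero_smul, Finset.sum_const_zero, add_zero,
    Fintype.sum_prod_type, hc, ← Finset.smul_sum, Representation.norm, map_sum, map_smul,
    LinearMap.sum_apply, hF, mul_one]

end RegularBasis

variable [Fintype N] (ρ)

theorem norm_apply_of_forall_eq {x : U} (hx : ∀ n, ρ n x = x) :
    ρ.norm x = Fintype.card N • x := by
  simp [norm, LinearMap.sum_apply, hx]

theorem eq_bot_of_trivial_summand [IsLocalRing R] [IsNoetherianRing R] [Module.Finite R U]
    (hcard : (Fintype.card N : R) ∈ maximalIdeal R) {F : Submodule R U}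
    (hnorm : ∀ x ∈ F, (∀ n, ρ n x = x) → ∃ f ∈ F, ρ.norm f = x) {W W' : Submodule R U}
    (hWW' : W ⊔ W' = F) (hdisj : Disjoint W W') (hW' : ∀ n, W'.map (ρ n) ≤ W')
    (hW : ∀ n, ∀ w ∈ W, ρ n w = w) : W = ⊥ := by
  refine Submodule.eq_bot_of_forall_eq_smul hcard fun w hw => ?_
  obtain ⟨f, hf, rfl⟩ := hnorm w (hWW' ▸ Submodule.mem_sup_left hw) fun n => hW n w hw
  obtain ⟨w₁, hw₁, w₂, hw₂, rfl⟩ := Submodule.mem_sup.mp (hWW' ▸ hf)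
  have hνw₂ : ρ.norm w₂ ∈ W' := by
    simpa [norm, LinearMap.sum_apply] using
      W'.sum_mem fun n _ => hW' n (Submodule.mem_map_of_mem hw₂)
  rw [map_add, norm_apply_of_forall_eq ρ (hW · w₁ hw₁)] at hw ⊢
  have h0 : ρ.norm w₂ = 0 := Submodule.disjoint_def.mp hdisj _
    ((W.add_mem_iff_right (W.nsmul_mem hw₁ _)).mp hw) hνw₂
  exact ⟨w₁, hw₁, by rw [h0, add_zero, Nat.cast_smul_eq_nsmul]⟩

theorem exists_isCompl_regular_trivial [Nontrivial R] (hN : (Nat.card N).Prime) {ι : Type u}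
    [Finite ι] (b : Module.Basis ι R U) (hb : ∀ n i, ∃ j, ρ n (b i) = b j) :
    ∃ F T : Submodule R U, IsCompl F T ∧ (∀ n, F.map (ρ n) ≤ F) ∧ (∀ n, ∀ t ∈ T, ρ n t = t) ∧
      (∃ (κ : Type u) (c : Module.Basis (κ × N) R F), ∀ n k m, ρ n (c (k, m)) = c (k, n * m)) ∧
      ∀ x ∈ F, (∀ n, ρ n x = x) → ∃ f ∈ F, ρ.norm f = x := by
  obtain ⟨_, hact⟩ := exists_mulAction_of_permutes_basis hb
  obtain ⟨κ, τ, e, he_inl, he_inr⟩ :=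
    MulAction.exists_equiv_prod_sum_fixedPoints (N := N) (ι := ι) fun _ hi _ hn =>
      MulAction.eq_one_of_smul_eq_of_prime_card hN hi hn
  let := Fintype.ofFinite ι
  let : Fintype κ := .ofInjective (fun k => e (.inl (k, 1))) fun _ _ h => by simpa using h
  let : Fintype τ := .ofInjective (fun t => e (.inr t)) fun _ _ h => by simpa using h
  let b' := b.reindex e.symm
  have hF : ∀ n m k, ρ n (b' (.inl (k, m))) = b' (.inl (k, n * m)) := by simp [b', hact, he_inl]
  have hT : ∀ n t, ρ n (b' (.inr t)) = b' (.inr t) := by simp [b', hact, he_inr]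
  have hli := b'.linearIndependent.comp _ Sum.inl_injective
  refine ⟨_, _,
    b'.linearIndependent.isCompl_span_image b'.span_eq Set.isCompl_range_inl_range_inr,
    map_span_inl_le hF, fun n _ => apply_eq_self_of_mem_span_inr hT n,
    ⟨κ, (Module.Basis.span hli).map (LinearEquiv.ofEq _ _ (by rw [Set.range_comp])), ?_⟩,
    fun x hx => exists_norm_eq_of_mem_span_inl hF hT hx⟩
  intro n k m
  simpa using hF n m k

end Representation

section RelativeNorm

variable {R U : Type*} [CommRing R] [AddCommGroup U] [Module R U] (σ : Module.End R U)
  (p : ℕ)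

/-- For `σ = ρ g` with `g` generating `G` and `N = ⟨g ^ p⟩`, this lifts the norm of `G / N`
to `G`; its defining property is `(σ - 1) * relNorm σ p = σ ^ p - 1`. -/
def relNorm : Module.End R U := ∑ i ∈ Finset.range p, σ ^ i

variable {σ p}

theorem relNorm_sub (x : U) : relNorm σ p (σ x - x) = (σ ^ p) x - x := by
  simpa [relNorm, LinearMap.sum_apply] using LinearMap.congr_fun (geom_sum_mul σ p) x

theorem sub_relNorm (x : U) : σ (relNorm σ p x) - relNorm σ p x = (σ ^ p) x - x := by
  simpa [relNorm, LinearMap.sum_apply] using LinearMap.congr_fun (mul_geom_sum σ p) x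

theorem Module.End.pow_apply_of_apply_eq {x : U} (hx : σ x = x) (n : ℕ) :
    (σ ^ n) x = x := by
  rw [Module.End.pow_apply]
  exact Function.iterate_fixed hx n

theorem relNorm_apply_of_apply_eq {x : U} (hx : σ x = x) : relNorm σ p x = p • x := by
  simp [relNorm, LinearMap.sum_apply, Module.End.pow_apply_of_apply_eq hx]

theorem relNorm_apply_mem {Y : Submodule R U} (hY : ∀ y ∈ Y, σ y ∈ Y) {y : U} (hy : y ∈ Y) :
    relNorm σ p y ∈ Y := by
  simpa [relNorm, LinearMap.sum_apply] using
    Y.sum_mem fun i _ => Module.End.pow_apply_mem_of_forall_mem i hY y hy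

theorem Commute.relNorm_left {ν : Module.End R U} (h : Commute σ ν) :
    Commute (relNorm σ p) ν :=
  Commute.sum_left _ _ _ fun i _ => h.pow_left i

theorem exists_relNorm_eq_of_smul_eq {ν : Module.End R U}
    (hν : ∀ x, (σ ^ p) x = x → ν x = p • x)
    (hker : LinearMap.ker ν ≤ LinearMap.range (σ ^ p - 1))
    {a f t : U} (ha : σ a = a) (ht : (σ ^ p) t = t)
    (h : p • a = ν (relNorm σ p f) + p • relNorm σ p t) :
    ∃ w, (σ ^ p) w = w ∧ a = relNorm σ p w := by
  set a₀ := a - relNorm σ p t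
  have ha₀ : σ a₀ = a₀ := by
    have := sub_relNorm (σ := σ) (p := p) t
    rw [ht, sub_self, sub_eq_zero] at this
    simp only [a₀, map_sub, ha, this]
  obtain ⟨g, hg⟩ : relNorm σ p f - a₀ ∈ LinearMap.range (σ ^ p - 1) := hker <| by
    rw [LinearMap.mem_ker, map_sub, hν a₀ (Module.End.pow_apply_of_apply_eq ha₀ p)]
    simp only [a₀, smul_sub, h]
    abel
  have hw : a₀ = relNorm σ p (f - (σ g - g)) := by
    rw [map_sub, relNorm_sub, show (σ ^ p) g - g = (σ ^ p - 1) g by simp, hg, sub_sub_cancel]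
  refine ⟨f - (σ g - g) + t, ?_, ?_⟩
  -- `(σ ^ p - 1) w = (σ - 1) (relNorm σ p w) = (σ - 1) a₀ = 0` for `w = f - (σ g - g)`
  · rw [map_add, ht, add_left_inj, ← sub_eq_zero, ← sub_relNorm, ← hw, ha₀, sub_self]
  · rw [map_add, ← hw, sub_add_cancel]

end RelativeNorm

section Decomposition

variable {R U : Type*} [CommRing R] [AddCommGroup U] [Module R U] {σ ν : Module.End R U}
  {p : ℕ} {X Y : Submodule R U}
  (hν : ∀ x, (σ ^ p) x = x → ν x = p • x)
  (hker : LinearMap.ker ν ≤ LinearMap.range (σ ^ p - 1))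
  (hX : ∀ x ∈ X, σ x = x) (hY : ∀ y ∈ Y, σ y ∈ Y) (hYX : ∀ w, (σ ^ p) w = w → w ∈ Y ⊔ X)
  (hdisj : Disjoint Y X)
include hν hker hX hY hYX hdisj

theorem exists_mem_eq_smul_of_smul_eq {x f t : U} (hx : x ∈ X) (ht : (σ ^ p) t = t)
    (h : p • x = ν (relNorm σ p f) + p • relNorm σ p t) : ∃ x' ∈ X, x = p • x' := by
  obtain ⟨w, hw, rfl⟩ := exists_relNorm_eq_of_smul_eq hν hker (hX _ hx) ht h
  obtain ⟨y, hy, x', hx', rfl⟩ := Submodule.mem_sup.mp (hYX w hw)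
  rw [map_add, relNorm_apply_of_apply_eq (hX x' hx')] at hx ⊢
  have hy0 : relNorm σ p y = 0 := Submodule.disjoint_def.mp hdisj _ (relNorm_apply_mem hY hy)
    ((X.add_mem_iff_left (X.nsmul_mem hx' p)).mp hx)
  exact ⟨x', hx', by rw [hy0, zero_add]⟩

theorem disjoint_of_fixed_eq_norm [IsLocalRing R] [IsNoetherianRing R]
    [Module.Finite R U] (hσν : Commute σ ν) (hp : (p : R) ∈ maximalIdeal R) {F : Submodule R U}
    (hF : ∀ x, p • x ∈ F → x ∈ F) (hFν : ∀ x ∈ F, (σ ^ p) x = x → ∃ f ∈ F, ν f = x) :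
    Disjoint X F := by
  rw [disjoint_iff]
  refine Submodule.eq_bot_of_forall_eq_smul hp fun x ⟨hxX, hxF⟩ => ?_
  obtain ⟨f, -, rfl⟩ := hFν _ hxF (Module.End.pow_apply_of_apply_eq (hX _ hxX) p)
  have h : p • ν f = ν (relNorm σ p f) + p • relNorm σ p 0 := by
    rw [← relNorm_apply_of_apply_eq (hX _ hxX), map_zero, smul_zero, add_zero,
      ← Module.End.mul_apply, ← Module.End.mul_apply, hσν.relNorm_left.eq]
  obtain ⟨x', hx', hxx'⟩ := exists_mem_eq_smul_of_smul_eq hν hker hX hY hYX hdisj hxX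
    (map_zero _) h
  exact ⟨x', ⟨hx', hF x' (hxx' ▸ hxF)⟩, by rw [hxx', Nat.cast_smul_eq_nsmul]⟩

theorem mem_map_projection_of_smul_mem [IsDomain R] [Module.IsTorsionFree R U]
    (hσν : Commute σ ν) (hp : (p : R) ≠ 0) {F T : Submodule R U} (hFT : IsCompl F T)
    (hT : ∀ t ∈ T, (σ ^ p) t = t) (hFν : ∀ x ∈ F, (σ ^ p) x = x → ∃ f ∈ F, ν f = x)
    {t : U} (ht : t ∈ T) (hpt : (p : R) • t ∈ X.map (T.projection F hFT.symm)) :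
    t ∈ X.map (T.projection F hFT.symm) := by
  obtain ⟨x, hx, hxt⟩ := hpt
  have hxF : x - p • t ∈ F := by
    rw [← Nat.cast_smul_eq_nsmul R, ← hxt,
      ← Submodule.projection_eq_self_sub_projection hFT.symm]
    exact Submodule.projection_apply_mem hFT x
  obtain ⟨f, -, hf⟩ := hFν _ hxF <| by
    rw [map_sub, map_nsmul, Module.End.pow_apply_of_apply_eq (hX x hx), hT t ht]
  have h : p • x = ν (relNorm σ p f) + p • relNorm σ p t := by
    rw [← relNorm_apply_of_apply_eq (hX x hx), ← Module.End.mul_apply, ← hσν.relNorm_left.eq,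
      Module.End.mul_apply, hf, map_sub, map_nsmul, sub_add_cancel]
  obtain ⟨x', hx', rfl⟩ :=
    exists_mem_eq_smul_of_smul_eq hν hker hX hY hYX hdisj hx (hT t ht) h
  refine ⟨x', hx', smul_right_injective U hp ?_⟩
  simp only [← hxt, map_nsmul, Nat.cast_smul_eq_nsmul]

theorem exists_le_sup_sup_eq_top_disjoint [IsDomain R] [IsDiscreteValuationRing R]
    [Module.Finite R U] [Module.IsTorsionFree R U] (hσν : Commute σ ν)
    (hp : (p : R) ∈ maximalIdeal R) (hp0 : (p : R) ≠ 0) {F T : Submodule R U}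
    (hFT : IsCompl F T) (hT : ∀ t ∈ T, (σ ^ p) t = t)
    (hFν : ∀ x ∈ F, (σ ^ p) x = x → ∃ f ∈ F, ν f = x) :
    ∃ Z ≤ T, F ⊔ Z ⊔ X = ⊤ ∧ Disjoint F (Z ⊔ X) ∧ Disjoint Z X := by
  have hXF : Disjoint X F := disjoint_of_fixed_eq_norm hν hker hX hY hYX hdisj hσν hp
    (fun x hx => hFT.mem_of_smul_mem hp0 (by rwa [Nat.cast_smul_eq_nsmul])) hFν
  have hXT : X.map (T.projection F hFT.symm) ≤ T := by
    rintro _ ⟨x, -, rfl⟩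
    exact Submodule.projection_apply_mem hFT.symm x
  obtain ⟨Z, hZT, hsup, hdisjZ⟩ := Submodule.exists_sup_eq_disjoint_of_smul_mem hp hXT
    fun t ht => mem_map_projection_of_smul_mem hν hker hX hY hYX hdisj hσν hp0 hFT hT hFν ht
  exact ⟨Z, hZT,
    Submodule.sup_sup_eq_top_and_disjoint_of_map_projection hFT hXF hZT hsup hdisjZ⟩

end Decomposition

theorem IsCyclic.exists_eq_zpowers_pow {G : Type*} [Group G] [IsCyclic G] {p : ℕ}
    (hp : p.Prime) (hG : Nat.card G = p ^ 2) {N : Subgroup G} (hN : Nat.card N = p) :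
    ∃ g : G, N = Subgroup.zpowers (g ^ p) := by
  obtain ⟨g, hg⟩ := IsCyclic.exists_generator (α := G)
  have : Finite G := Nat.finite_of_card_ne_zero (by rw [hG]; exact pow_ne_zero 2 hp.ne_zero)
  have hidx : N.index = p := by
    have := N.card_mul_index
    rw [hN, hG, sq] at this
    exact Nat.eq_of_mul_eq_mul_left hp.pos this
  have : N.Normal := Subgroup.normal_of_isMulCommutative N
  have hg' : orderOf g = p ^ 2 := by rw [orderOf_eq_card_of_forall_mem_zpowers hg, hG]
  refine ⟨g, (Subgroup.eq_of_le_of_card_ge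
    (Subgroup.zpowers_le.mpr (hidx ▸ N.pow_index_mem g)) ?_).symm⟩
  rw [Nat.card_zpowers, orderOf_pow_of_dvd hp.ne_zero (hg' ▸ dvd_pow_self p two_ne_zero), hg',
    hN, sq, Nat.mul_div_cancel _ hp.pos]

namespace Representation

variable {R G U : Type} [CommRing R] [Group G] [AddCommGroup U] [Module R U]
  (ρ : Representation R G U)

theorem augSub_le_range_sub_one [Finite G] {N : Subgroup G} {h : G}
    (hN : N ≤ Subgroup.zpowers h) : augSub ρ N ≤ LinearMap.range (ρ h - 1) := by
  refine Submodule.span_le.mpr ?_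
  rintro _ ⟨n, hn, u, rfl⟩
  obtain ⟨k, rfl⟩ := mem_powers_iff_mem_zpowers.mpr (hN hn)
  exact ⟨∑ i ∈ Finset.range k, (ρ h ^ i) u, by
    simpa [map_pow, LinearMap.sum_apply] using LinearMap.congr_fun (mul_geom_sum (ρ h) k) u⟩

theorem ker_norm_le_augSub [IsDomain R] (N : Subgroup G) [Fintype N]
    [Module.IsTorsionFree R (U ⧸ augSub ρ N)] (hN : (Fintype.card N : R) ≠ 0) :
    LinearMap.ker (Representation.norm (ρ.comp N.subtype)) ≤ augSub ρ N := by
  intro z hz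
  have hsum : ∑ n : N, (ρ n z - z) ∈ augSub ρ N :=
    Submodule.sum_mem _ fun n _ => Submodule.subset_span ⟨n, n.2, z, rfl⟩
  rw [Finset.sum_sub_distrib, Finset.sum_const, Finset.card_univ, ← Nat.cast_smul_eq_nsmul R]
    at hsum
  have hnorm : ∑ n : N, ρ n z = 0 := by simpa [Representation.norm, LinearMap.sum_apply] using hz
  rw [hnorm, zero_sub, neg_mem_iff, ← Submodule.Quotient.mk_eq_zero, Submodule.Quotient.mk_smul,
    smul_eq_zero_iff_right hN] at hsum
  exact (Submodule.Quotient.mk_eq_zero _).mp hsum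

theorem forall_apply_eq_iff_of_eq_zpowers [Finite G] {N : Subgroup G} {h : G}
    (hN : N = Subgroup.zpowers h) {x : U} : (∀ n : N, ρ n x = x) ↔ ρ h x = x := by
  subst hN
  refine ⟨fun H => H ⟨h, Subgroup.mem_zpowers h⟩, fun H n => ?_⟩
  obtain ⟨k, hk⟩ := mem_powers_iff_mem_zpowers.mpr n.2
  rw [← hk, map_pow]
  exact Module.End.pow_apply_of_apply_eq H k

end Representation

theorem stmt_9_general (p : ℕ) (hp : p.Prime) (R G U : Type) [CommRing R] [IsDomain R]
    [IsDiscreteValuationRing R] [CharZero R]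
    (hres : (p : R) ∈ IsLocalRing.maximalIdeal R)
    [Group G] [Fintype G] (hcyc : IsCyclic G) (hcard : Fintype.card G = p ^ 2)
    (N : Subgroup G) [Fintype ↥N] (hN : Fintype.card ↥N = p)
    [AddCommGroup U] [Module R U] [Module.Finite R U] [Module.Free R U]
    (ρ : Representation R G U)
    -- (1) U restricted to N is an RN-permutation module
    (hperm : ∃ (ι : Type) (b : Module.Basis ι R U), ∀ n ∈ N, ∀ i : ι, ∃ j, ρ n (b i) = b j)
    -- and U^N = Y ⊕ X as RG-modules with X a maximal trivial summand
    (X Y : Submodule R U)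
    (hsup : Y ⊔ X = Representation.invariants (ρ.comp N.subtype))
    (hdisj : Disjoint Y X)
    (hYinv : ∀ g : G, Y.map (ρ g) ≤ Y)
    (hXtriv : ∀ (g : G), ∀ x ∈ X, ρ g x = x)
    -- (2) U_N and U_G are R-torsion-free
    (hUN : NoZeroSMulDivisors R (U ⧸ augSub ρ N)) :
    ∃ F Z : Submodule R U,
      -- U|_N = F ⊕ Z ⊕ X
      F ⊔ Z ⊔ X = ⊤ ∧ Disjoint F (Z ⊔ X) ∧ Disjoint Z X ∧
      (∀ n ∈ N, F.map (ρ n) ≤ F) ∧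
      -- N acts trivially on Z (and on X, by hypothesis)
      (∀ n ∈ N, ∀ z ∈ Z, ρ n z = z) ∧
      -- F is RN-free
      (∃ (ι : Type) (b : Module.Basis (ι × ↥N) R ↥F), ∀ (n : ↥N) (i : ι) (m : ↥N),
        ρ (↑n : G) (↑(b (i, m)) : U) = (↑(b (i, n * m)) : U)) ∧
      -- Z ⊕ X is a maximal trivial RN-summand: F has no nonzero trivial RN-summand
      (∀ W W' : Submodule R U, W ⊔ W' = F → Disjoint W W' →
        (∀ n ∈ N, W.map (ρ n) ≤ W) → (∀ n ∈ N, W'.map (ρ n) ≤ W') →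
        (∀ n ∈ N, ∀ w ∈ W, ρ n w = w) → W = ⊥) := by
  obtain ⟨ι, b, hb⟩ := hperm
  have : Finite ι := Module.Finite.finite_basis b
  have hpR : (p : R) ≠ 0 := Nat.cast_ne_zero.mpr hp.ne_zero
  obtain ⟨g, hNg⟩ := IsCyclic.exists_eq_zpowers_pow (N := N) hp
    (by rw [Nat.card_eq_fintype_card, hcard]) (by rw [Nat.card_eq_fintype_card, hN])
  set ρN : Representation R N U := ρ.comp N.subtype
  obtain ⟨F, T, hFT, hFρ, hTρ, hFfree, hFnorm⟩ := ρN.exists_isCompl_regular_trivial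
    (by rw [Nat.card_eq_fintype_card, hN]; exact hp) b fun n i => hb n n.2 i
  have hfix : ∀ x, (ρ g ^ p) x = x ↔ ∀ n, ρN n x = x := fun x => by
    rw [← map_pow]
    exact (ρ.forall_apply_eq_iff_of_eq_zpowers hNg).symm
  have hν : ∀ x, (ρ g ^ p) x = x → ρN.norm x = p • x := fun x hx => by
    rw [ρN.norm_apply_of_forall_eq ((hfix x).mp hx), hN]
  have hker : LinearMap.ker ρN.norm ≤ LinearMap.range (ρ g ^ p - 1) :=
    (ρ.ker_norm_le_augSub N (by rwa [hN])).trans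
      (map_pow ρ g p ▸ ρ.augSub_le_range_sub_one hNg.le)
  have hσν : Commute (ρ g) ρN.norm :=
    Commute.sum_right _ _ _ fun n _ => (show Commute g n from mul_comm' g n).map ρ
  obtain ⟨Z, hZT, hdec⟩ := exists_le_sup_sup_eq_top_disjoint hν hker
    (fun x hx => hXtriv g x hx) (fun y hy => hYinv g ⟨y, hy, rfl⟩)
    (fun w hw => hsup ▸ (Representation.mem_invariants ρN w).mpr ((hfix w).mp hw)) hdisj
    hσν hres hpR hFT (fun t ht => (hfix t).mpr fun n => hTρ n t ht)
    fun x hx hτ => hFnorm x hx ((hfix x).mp hτ)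
  refine ⟨F, Z, hdec.1, hdec.2.1, hdec.2.2, fun n hn => hFρ ⟨n, hn⟩,
    fun n hn z hz => hTρ ⟨n, hn⟩ z (hZT hz), hFfree, fun W W' hWW' hd _ hW' hW => ?_⟩
  exact ρN.eq_bot_of_trivial_summand (by rwa [hN]) hFnorm hWW' hd (fun n => hW' n n.2)
    fun n => hW n n.2

/-- Let `G` be cyclic of order `p²`, `N` its subgroup of order `p`, and `U` an
`RG`-lattice such that (1) `U|_N` is an `RN`-permutation module and `U^N = Y ⊕ X` as
`RG`-modules with `X` a maximal trivial summand, and (2) `U_N` and `U_G` are `R`-torsion-free.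
Then there is a decomposition `U|_N = F ⊕ Z ⊕ X` where `F` is `RN`-free and `Z ⊕ X` is a
maximal trivial `RN`-summand of `U|_N`. -/
theorem stmt_9 (p : ℕ) (hp : p.Prime) (R G U : Type) [CommRing R] [IsDomain R]
    [IsDiscreteValuationRing R] [IsAdicComplete (IsLocalRing.maximalIdeal R) R] [CharZero R]
    (hres : (p : R) ∈ IsLocalRing.maximalIdeal R)
    [Group G] [Fintype G] (hcyc : IsCyclic G) (hcard : Fintype.card G = p ^ 2)
    (N : Subgroup G) [Fintype ↥N] (hN : Fintype.card ↥N = p)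
    [AddCommGroup U] [Module R U] [Module.Finite R U] [Module.Free R U]
    (ρ : Representation R G U)
    -- (1) U restricted to N is an RN-permutation module
    (hperm : ∃ (ι : Type) (b : Module.Basis ι R U), ∀ n ∈ N, ∀ i : ι, ∃ j, ρ n (b i) = b j)
    -- and U^N = Y ⊕ X as RG-modules with X a maximal trivial summand
    (X Y : Submodule R U)
    (hsup : Y ⊔ X = Representation.invariants (ρ.comp N.subtype))
    (hdisj : Disjoint Y X)
    (hXinv : ∀ g : G, X.map (ρ g) ≤ X) (hYinv : ∀ g : G, Y.map (ρ g) ≤ Y)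
    (hXtriv : ∀ (g : G), ∀ x ∈ X, ρ g x = x)
    (hmax : ∀ W W' : Submodule R U, W ⊔ W' = Y → Disjoint W W' →
      (∀ g : G, W.map (ρ g) ≤ W) → (∀ g : G, W'.map (ρ g) ≤ W') →
      (∀ (g : G), ∀ w ∈ W, ρ g w = w) → W = ⊥)
    -- (2) U_N and U_G are R-torsion-free
    (hUN : NoZeroSMulDivisors R (U ⧸ augSub ρ N))
    (hUG : NoZeroSMulDivisors R (U ⧸ augSub ρ (⊤ : Subgroup G))) :
    ∃ F Z : Submodule R U,
      -- U|_N = F ⊕ Z ⊕ X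
      F ⊔ Z ⊔ X = ⊤ ∧ Disjoint F (Z ⊔ X) ∧ Disjoint Z X ∧
      (∀ n ∈ N, F.map (ρ n) ≤ F) ∧
      -- N acts trivially on Z (and on X, by hypothesis)
      (∀ n ∈ N, ∀ z ∈ Z, ρ n z = z) ∧
      -- F is RN-free
      (∃ (ι : Type) (b : Module.Basis (ι × ↥N) R ↥F), ∀ (n : ↥N) (i : ι) (m : ↥N),
        ρ (↑n : G) (↑(b (i, m)) : U) = (↑(b (i, n * m)) : U)) ∧
      -- Z ⊕ X is a maximal trivial RN-summand: F has no nonzero trivial RN-summand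
      (∀ W W' : Submodule R U, W ⊔ W' = F → Disjoint W W' →
        (∀ n ∈ N, W.map (ρ n) ≤ W) → (∀ n ∈ N, W'.map (ρ n) ≤ W') →
        (∀ n ∈ N, ∀ w ∈ W, ρ n w = w) → W = ⊥) :=
  stmt_9_general p hp R G U hres hcyc hcard N hN ρ hperm X Y hsup hdisj hYinv hXtriv hUN
end
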